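/- (Lemma C.3 with explicit constants.) Let n ≥ 1, let x_1, …, x_n be reals, let ξ > 0 and 0 < C' ≤ C''. Let A ⊆ {1, …, n−1}, c_∘ ∈ A, and let c_- be the largest element of (A \ {c_∘}) ∪ {0} smaller than c_∘ and c_+ the smallest element of (A \ {c_∘}) ∪ {n} larger than c_∘. If C' n ≤ RSS(A; x) and RSS(A \ {c_∘}; x) ≤ C'' n, then, writing 𝒳 = 𝒳_{c_-, c_∘, c_+}(x), one has 𝒳²/(2 C'') − ξ ≤ SC(A \ {c_∘}; x) − SC(A; x) ≤ 𝒳²/(2 C') − ξ. -/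

import Mathlib

open Finset

/-- Mean of `x` over the interval `(s, e]`. -/
noncomputable def segMean (x : ℕ → ℝ) (s e : ℕ) : ℝ :=
  (∑ t ∈ Finset.Ioc s e, x t) / ((e : ℝ) - (s : ℝ))

/-- CUSUM statistic of `x` at split point `b` on the interval `(s, e]`. -/
noncomputable def cusum (x : ℕ → ℝ) (s b e : ℕ) : ℝ :=
  Real.sqrt (((b : ℝ) - s) * ((e : ℝ) - b) / ((e : ℝ) - s)) *
    (segMean x s b - segMean x b e)

/-- Largest element of `A ∪ {0}` that is `< t`. -/
def lbd (A : Finset ℕ) (t : ℕ) : ℕ :=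
  WithBot.unbotD 0 ((insert 0 A).filter (fun a => a < t)).max

/-- Smallest element of `A ∪ {n}` that is `≥ t`. -/
def ubd (A : Finset ℕ) (n t : ℕ) : ℕ :=
  WithTop.untopD n (((insert n A).filter (fun a => t ≤ a)).min)

/-- Residual sum of squares of `x_1, …, x_n` with respect to the segmentation
of `{1, …, n}` induced by the set of change point candidates `A`:
each `t` lies in the segment `(lbd A t, ubd A n t]`. -/
noncomputable def RSS (x : ℕ → ℝ) (n : ℕ) (A : Finset ℕ) : ℝ :=
  ∑ t ∈ Finset.Icc 1 n, (x t - segMean x (lbd A t) (ubd A n t)) ^ 2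

/-- Schwarz criterion with penalty `ξ`. -/
noncomputable def SC (x : ℕ → ℝ) (n : ℕ) (ξ : ℝ) (A : Finset ℕ) : ℝ :=
  ((n : ℝ) / 2) * Real.log (RSS x n A / n) + (A.card : ℝ) * ξ

/-- `ε_1, …, ε_n` satisfies the uniform interval bound with level `ω`:
`|∑_{t=s+1}^e ε_t| ≤ ω √(e − s)` for all `0 ≤ s < e ≤ n`. -/
def UIB (ε : ℕ → ℝ) (n : ℕ) (ω : ℝ) : Prop :=
  ∀ s e : ℕ, s < e → e ≤ n →
    |∑ t ∈ Finset.Ioc s e, ε t| ≤ ω * Real.sqrt ((e : ℝ) - s)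

lemma lbd_eq {A : Finset ℕ} {t m : ℕ} (hm : m ∈ insert 0 A) (hmt : m < t)
    (hmax : ∀ a ∈ insert 0 A, a < t → a ≤ m) : lbd A t = m := by
  have h1 : ((insert 0 A).filter (fun a => a < t)).max = (m : WithBot ℕ) := by
    apply le_antisymm
    · apply Finset.max_le
      intro a ha
      simp only [mem_filter] at ha
      exact WithBot.coe_le_coe.mpr (hmax a ha.1 ha.2)
    · exact Finset.le_max (by simp [Finset.mem_filter, hm, hmt])
  rw [lbd, h1]; rfl

lemma ubd_eq {A : Finset ℕ} {n t m : ℕ} (hm : m ∈ insert n A) (hmt : t ≤ m)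
    (hmin : ∀ a ∈ insert n A, t ≤ a → m ≤ a) : ubd A n t = m := by
  have h1 : ((insert n A).filter (fun a => t ≤ a)).min = (m : WithTop ℕ) := by
    apply le_antisymm
    · exact Finset.min_le (by simp [Finset.mem_filter, hm, hmt])
    · apply Finset.le_min
      intro a ha
      simp only [mem_filter] at ha
      exact WithTop.coe_le_coe.mpr (hmin a ha.1 ha.2)
  rw [ubd, h1]; rfl

lemma lbd_spec (A : Finset ℕ) {t : ℕ} (ht : 0 < t) :
    lbd A t ∈ insert 0 A ∧ lbd A t < t ∧ ∀ a ∈ insert 0 A, a < t → a ≤ lbd A t := by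
  set S := (insert 0 A).filter (fun a => a < t) with hS
  have hne : S.Nonempty := ⟨0, by simp [hS, ht]⟩
  have hmax : S.max = (S.max' hne : WithBot ℕ) := (Finset.coe_max' hne).symm
  have hval : lbd A t = S.max' hne := by rw [lbd, ← hS, hmax]; rfl
  have hmem := S.max'_mem hne
  have hmem2 := Finset.mem_filter.mp hmem
  refine ⟨by rw [hval]; exact hmem2.1, by rw [hval]; exact hmem2.2, ?_⟩
  intro a ha hat
  rw [hval]
  exact S.le_max' a (by simp [hS, ha, hat])

lemma ubd_spec (A : Finset ℕ) {n t : ℕ} (ht : t ≤ n) :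
    ubd A n t ∈ insert n A ∧ t ≤ ubd A n t ∧ ∀ a ∈ insert n A, t ≤ a → ubd A n t ≤ a := by
  set S := (insert n A).filter (fun a => t ≤ a) with hS
  have hne : S.Nonempty := ⟨n, by simp [hS, ht]⟩
  have hmin : S.min = (S.min' hne : WithTop ℕ) := (Finset.coe_min' hne).symm
  have hval : ubd A n t = S.min' hne := by rw [ubd, ← hS, hmin]; rfl
  have hmem := S.min'_mem hne
  have hmem2 := Finset.mem_filter.mp hmem
  refine ⟨by rw [hval]; exact hmem2.1, by rw [hval]; exact hmem2.2, ?_⟩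
  intro a ha hat
  rw [hval]
  exact S.min'_le a (by simp [hS, ha, hat])

lemma sum_Ioc_eq (x : ℕ → ℝ) {s b : ℕ} (h : s < b) :
    ∑ t ∈ Finset.Ioc s b, x t = ((b:ℝ) - s) * segMean x s b := by
  have hne : (b:ℝ) - s ≠ 0 := by
    have : (s:ℝ) < b := by exact_mod_cast h
    linarith
  rw [segMean, mul_div_cancel₀ _ hne]

lemma card_Ioc_cast {s b : ℕ} (h : s < b) :
    ((Finset.Ioc s b).card : ℝ) = (b:ℝ) - s := by
  rw [Nat.card_Ioc]
  have := h.le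
  push_cast [Nat.cast_sub this]
  ring

lemma sum_sq_shift (x : ℕ → ℝ) {s b : ℕ} (h : s < b) (μ : ℝ) :
    ∑ t ∈ Finset.Ioc s b, (x t - μ)^2
      = (∑ t ∈ Finset.Ioc s b, (x t - segMean x s b)^2)
        + ((b:ℝ) - s) * (segMean x s b - μ)^2 := by
  set m := segMean x s b with hm
  have h1 : ∀ t, (x t - μ)^2 = (x t - m)^2 + (2*(m-μ))*(x t - m) + (m - μ)^2 := by
    intro t; ring
  simp only [h1]
  rw [Finset.sum_add_distrib, Finset.sum_add_distrib, ← Finset.mul_sum, Finset.sum_const,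
    nsmul_eq_mul, card_Ioc_cast h]
  have h2 : ∑ t ∈ Finset.Ioc s b, (x t - m) = 0 := by
    rw [Finset.sum_sub_distrib, Finset.sum_const, nsmul_eq_mul, card_Ioc_cast h,
      sum_Ioc_eq x h, ← hm]
    ring
  rw [h2]
  ring

/-- Lemma C.3 with explicit constants: if `C' n ≤ RSS(A; x)` and
`RSS(A \ {c₀}; x) ≤ C'' n`, then
`𝒳²/(2C'') − ξ ≤ SC(A \ {c₀}; x) − SC(A; x) ≤ 𝒳²/(2C') − ξ`, where `𝒳` is the
CUSUM statistic at `c₀` over the interval given by its neighbours in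
`(A \ {c₀}) ∪ {0, n}`. -/
theorem sc_diff_bounds
    (n : ℕ) (hn : 1 ≤ n) (x : ℕ → ℝ) (ξ : ℝ) (hξ : 0 < ξ)
    (C' C'' : ℝ) (hC' : 0 < C') (hC'C'' : C' ≤ C'')
    (A : Finset ℕ) (hA : A ⊆ Finset.Icc 1 (n - 1))
    (c₀ : ℕ) (hc₀ : c₀ ∈ A)
    (cm cp : ℕ)
    (hcm1 : cm < c₀) (hcm2 : cm ∈ insert 0 (A.erase c₀))
    (hcm3 : ∀ a ∈ insert 0 (A.erase c₀), a < c₀ → a ≤ cm)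
    (hcp1 : c₀ < cp) (hcp2 : cp ∈ insert n (A.erase c₀))
    (hcp3 : ∀ a ∈ insert n (A.erase c₀), c₀ < a → cp ≤ a)
    (hlow : C' * n ≤ RSS x n A) (hup : RSS x n (A.erase c₀) ≤ C'' * n) :
    (cusum x cm c₀ cp) ^ 2 / (2 * C'') - ξ ≤ SC x n ξ (A.erase c₀) - SC x n ξ A
    ∧ SC x n ξ (A.erase c₀) - SC x n ξ A ≤ (cusum x cm c₀ cp) ^ 2 / (2 * C') - ξ := by
  -- Basic numeric facts
  have hc₀Icc := Finset.mem_Icc.mp (hA hc₀)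
  have hc₀n : c₀ < n := by omega
  have hc₀1 : 1 ≤ c₀ := hc₀Icc.1
  have hcpn : cp ≤ n := by
    rcases Finset.mem_insert.mp hcp2 with h | h
    · omega
    · have := Finset.mem_Icc.mp (hA (Finset.mem_of_mem_erase h))
      omega
  -- convenient forms of the hypotheses
  have hcm2' : cm = 0 ∨ (cm ≠ c₀ ∧ cm ∈ A) := by
    rcases Finset.mem_insert.mp hcm2 with h | h
    · exact Or.inl h
    · exact Or.inr (Finset.mem_erase.mp h)
  have hcp2' : cp = n ∨ (cp ≠ c₀ ∧ cp ∈ A) := by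
    rcases Finset.mem_insert.mp hcp2 with h | h
    · exact Or.inl h
    · exact Or.inr (Finset.mem_erase.mp h)
  have hcm3' : ∀ a ∈ A, a ≠ c₀ → a < c₀ → a ≤ cm := fun a ha h1 h2 =>
    hcm3 a (Finset.mem_insert_of_mem (Finset.mem_erase.mpr ⟨h1, ha⟩)) h2
  have hcp3' : ∀ a ∈ A, a ≠ c₀ → c₀ < a → cp ≤ a := fun a ha h1 h2 =>
    hcp3 a (Finset.mem_insert_of_mem (Finset.mem_erase.mpr ⟨h1, ha⟩)) h2
  -- Segment identification lemmas
  -- (a) for t ∈ (cm, c₀]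
  have hsegA1 : ∀ t, cm < t → t ≤ c₀ → lbd A t = cm ∧ ubd A n t = c₀ := by
    intro t ht1 ht2
    constructor
    · apply lbd_eq (t := t) (m := cm)
      · rcases hcm2' with h | ⟨h1, h2⟩
        · simp [h]
        · exact Finset.mem_insert_of_mem h2
      · exact ht1
      · intro a ha hat
        rcases Finset.mem_insert.mp ha with h | h
        · omega
        · exact hcm3' a h (by omega) (by omega)
    · apply ubd_eq (m := c₀)
      · exact Finset.mem_insert_of_mem hc₀
      · exact ht2
      · intro a ha hta
        by_contra hcon
        push_neg at hcon
        rcases Finset.mem_insert.mp ha with h | h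
        · omega
        · have := hcm3' a h (by omega) (by omega)
          omega
  -- (b) for t ∈ (c₀, cp]
  have hsegA2 : ∀ t, c₀ < t → t ≤ cp → lbd A t = c₀ ∧ ubd A n t = cp := by
    intro t ht1 ht2
    constructor
    · apply lbd_eq (m := c₀)
      · exact Finset.mem_insert_of_mem hc₀
      · exact ht1
      · intro a ha hat
        by_contra hcon
        push_neg at hcon
        rcases Finset.mem_insert.mp ha with h | h
        · omega
        · have := hcp3' a h (by omega) (by omega)
          omega
    · apply ubd_eq (m := cp)
      · rcases hcp2' with h | ⟨h1, h2⟩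
        · simp [h]
        · exact Finset.mem_insert_of_mem h2
      · exact ht2
      · intro a ha hta
        rcases Finset.mem_insert.mp ha with h | h
        · omega
        · exact hcp3' a h (by omega) (by omega)
  -- (c) for t ∈ (cm, cp] w.r.t. A.erase c₀
  have hsegE : ∀ t, cm < t → t ≤ cp →
      lbd (A.erase c₀) t = cm ∧ ubd (A.erase c₀) n t = cp := by
    intro t ht1 ht2
    constructor
    · apply lbd_eq (m := cm) hcm2 ht1
      intro a ha hat
      by_contra hcon
      push_neg at hcon
      rcases Finset.mem_insert.mp ha with h | h
      · omega
      · have h' := Finset.mem_erase.mp h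
        rcases lt_trichotomy a c₀ with hlt | heq | hgt
        · have := hcm3' a h'.2 h'.1 hlt; omega
        · exact h'.1 heq
        · have := hcp3' a h'.2 h'.1 hgt; omega
    · apply ubd_eq (m := cp) hcp2 ht2
      intro a ha hta
      by_contra hcon
      push_neg at hcon
      rcases Finset.mem_insert.mp ha with h | h
      · omega
      · have h' := Finset.mem_erase.mp h
        rcases lt_trichotomy a c₀ with hlt | heq | hgt
        · have := hcm3' a h'.2 h'.1 hlt; omega
        · exact h'.1 heq
        · have := hcp3' a h'.2 h'.1 hgt; omega
  -- (d) for t outside (cm, cp]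
  have hsegOut : ∀ t, 1 ≤ t → t ≤ n → (t ≤ cm ∨ cp < t) →
      lbd A t = lbd (A.erase c₀) t ∧ ubd A n t = ubd (A.erase c₀) n t := by
    intro t ht1 ht2 hcase
    obtain ⟨hl1, hl2, hl3⟩ := lbd_spec (A.erase c₀) (t := t) (by omega)
    obtain ⟨hu1, hu2, hu3⟩ := ubd_spec (A.erase c₀) (n := n) (t := t) ht2
    have hlmem : lbd (A.erase c₀) t ∈ insert 0 A := by
      rcases Finset.mem_insert.mp hl1 with h | h
      · simp [h]
      · exact Finset.mem_insert_of_mem (Finset.mem_of_mem_erase h)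
    have humem : ubd (A.erase c₀) n t ∈ insert n A := by
      rcases Finset.mem_insert.mp hu1 with h | h
      · simp [h]
      · exact Finset.mem_insert_of_mem (Finset.mem_of_mem_erase h)
    constructor
    · apply lbd_eq hlmem hl2
      intro a ha hat
      by_cases hac : a = c₀
      · -- a = c₀ : only possible when cp < t, and then cp ≤ lbd
        rcases hcase with h | h
        · omega
        · -- cp < t, so cp ∈ erase and cp ≤ lbd
          have hcpA : cp ∈ insert 0 (A.erase c₀) := by
            rcases hcp2' with he | ⟨h1, h2⟩
            · omega
            · exact Finset.mem_insert_of_mem (Finset.mem_erase.mpr ⟨h1, h2⟩)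
          have := hl3 cp hcpA (by omega)
          omega
      · apply hl3 a _ hat
        rcases Finset.mem_insert.mp ha with h | h
        · simp [h]
        · exact Finset.mem_insert_of_mem (Finset.mem_erase.mpr ⟨hac, h⟩)
    · apply ubd_eq humem hu2
      intro a ha hta
      by_cases hac : a = c₀
      · rcases hcase with h | h
        · -- t ≤ cm : ubd ≤ cm < c₀
          have hcmE : cm ∈ insert n (A.erase c₀) := by
            rcases hcm2' with he | ⟨h1, h2⟩
            · omega
            · exact Finset.mem_insert_of_mem (Finset.mem_erase.mpr ⟨h1, h2⟩)
          have := hu3 cm hcmE (by omega)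
          omega
        · omega
      · apply hu3 a _ hta
        rcases Finset.mem_insert.mp ha with h | h
        · simp [h]
        · exact Finset.mem_insert_of_mem (Finset.mem_erase.mpr ⟨hac, h⟩)
  -- Real-valued segment lengths
  set N₁ : ℝ := (c₀ : ℝ) - cm with hN₁def
  set N₂ : ℝ := (cp : ℝ) - c₀ with hN₂def
  have hN₁ : 0 < N₁ := by
    rw [hN₁def]
    exact sub_pos.mpr (by exact_mod_cast hcm1)
  have hN₂ : 0 < N₂ := by
    rw [hN₂def]
    exact sub_pos.mpr (by exact_mod_cast hcp1)
  have hN₁₂ : (cp : ℝ) - cm = N₁ + N₂ := by rw [hN₁def, hN₂def]; ring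
  set μ₁ : ℝ := segMean x cm c₀ with hμ₁def
  set μ₂ : ℝ := segMean x c₀ cp with hμ₂def
  set μ : ℝ := segMean x cm cp with hμdef
  -- mean relation
  have hμrel : (N₁ + N₂) * μ = N₁ * μ₁ + N₂ * μ₂ := by
    have hsplit : (∑ t ∈ Finset.Ioc cm c₀, x t) + (∑ t ∈ Finset.Ioc c₀ cp, x t)
        = ∑ t ∈ Finset.Ioc cm cp, x t :=
      Finset.sum_Ioc_consecutive _ hcm1.le hcp1.le
    rw [sum_Ioc_eq x hcm1, sum_Ioc_eq x hcp1, sum_Ioc_eq x (hcm1.trans hcp1)] at hsplit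
    rw [← hμ₁def, ← hμ₂def, ← hμdef, hN₁₂, ← hN₁def, ← hN₂def] at hsplit
    linarith [hsplit]
  -- cusum squared
  have hXsq : (cusum x cm c₀ cp)^2 = N₁ * N₂ / (N₁ + N₂) * (μ₁ - μ₂)^2 := by
    rw [cusum, mul_pow, Real.sq_sqrt, ← hμ₁def, ← hμ₂def, hN₁₂, ← hN₁def, ← hN₂def]
    rw [hN₁₂, ← hN₁def, ← hN₂def]
    positivity
  -- RSS identity
  have hsub : Finset.Ioc cm cp ⊆ Finset.Icc 1 n := by
    intro t ht
    rw [Finset.mem_Ioc] at ht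
    rw [Finset.mem_Icc]
    omega
  have hRSSsplit : ∀ B : Finset ℕ, RSS x n B
      = (∑ t ∈ Finset.Icc 1 n \ Finset.Ioc cm cp,
          (x t - segMean x (lbd B t) (ubd B n t)) ^ 2)
        + ∑ t ∈ Finset.Ioc cm cp, (x t - segMean x (lbd B t) (ubd B n t)) ^ 2 :=
    fun B => (Finset.sum_sdiff hsub).symm
  have houter : (∑ t ∈ Finset.Icc 1 n \ Finset.Ioc cm cp,
          (x t - segMean x (lbd A t) (ubd A n t)) ^ 2)
      = ∑ t ∈ Finset.Icc 1 n \ Finset.Ioc cm cp,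
          (x t - segMean x (lbd (A.erase c₀) t) (ubd (A.erase c₀) n t)) ^ 2 := by
    apply Finset.sum_congr rfl
    intro t ht
    rw [Finset.mem_sdiff, Finset.mem_Icc, Finset.mem_Ioc] at ht
    obtain ⟨h1, h2⟩ := hsegOut t ht.1.1 ht.1.2 (by omega)
    rw [h1, h2]
  have hinnerE : (∑ t ∈ Finset.Ioc cm cp,
          (x t - segMean x (lbd (A.erase c₀) t) (ubd (A.erase c₀) n t)) ^ 2)
      = ∑ t ∈ Finset.Ioc cm cp, (x t - μ) ^ 2 := by
    apply Finset.sum_congr rfl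
    intro t ht
    rw [Finset.mem_Ioc] at ht
    obtain ⟨h1, h2⟩ := hsegE t ht.1 ht.2
    rw [h1, h2, hμdef]
  have hinnerA : (∑ t ∈ Finset.Ioc cm cp,
          (x t - segMean x (lbd A t) (ubd A n t)) ^ 2)
      = (∑ t ∈ Finset.Ioc cm c₀, (x t - μ₁) ^ 2)
        + ∑ t ∈ Finset.Ioc c₀ cp, (x t - μ₂) ^ 2 := by
    rw [← Finset.sum_Ioc_consecutive _ hcm1.le hcp1.le]
    congr 1
    · apply Finset.sum_congr rfl
      intro t ht
      rw [Finset.mem_Ioc] at ht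
      obtain ⟨h1, h2⟩ := hsegA1 t ht.1 ht.2
      rw [h1, h2, hμ₁def]
    · apply Finset.sum_congr rfl
      intro t ht
      rw [Finset.mem_Ioc] at ht
      obtain ⟨h1, h2⟩ := hsegA2 t ht.1 ht.2
      rw [h1, h2, hμ₂def]
  have hdecomp : (∑ t ∈ Finset.Ioc cm cp, (x t - μ) ^ 2)
      = (∑ t ∈ Finset.Ioc cm c₀, (x t - μ₁) ^ 2)
        + (∑ t ∈ Finset.Ioc c₀ cp, (x t - μ₂) ^ 2)
        + (N₁ * (μ₁ - μ)^2 + N₂ * (μ₂ - μ)^2) := by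
    rw [← Finset.sum_Ioc_consecutive _ hcm1.le hcp1.le, sum_sq_shift x hcm1 μ,
      sum_sq_shift x hcp1 μ, ← hμ₁def, ← hμ₂def, ← hN₁def, ← hN₂def]
    ring
  have hcross : N₁ * (μ₁ - μ)^2 + N₂ * (μ₂ - μ)^2
      = N₁ * N₂ / (N₁ + N₂) * (μ₁ - μ₂)^2 := by
    have h12 : N₁ + N₂ ≠ 0 := by positivity
    have hμ' : μ = (N₁ * μ₁ + N₂ * μ₂) / (N₁ + N₂) := by
      field_simp
      linarith [hμrel]
    rw [hμ']
    field_simp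
    ring
  have hkey : RSS x n (A.erase c₀) = RSS x n A + (cusum x cm c₀ cp)^2 := by
    rw [hRSSsplit A, hRSSsplit (A.erase c₀), houter, hinnerE, hinnerA, hdecomp, hcross, hXsq]
    ring
  -- Final analytic step
  clear hRSSsplit houter hinnerE hinnerA hdecomp hcross hXsq hμrel hsegA1 hsegA2 hsegE hsegOut
    hsub hN₁ hN₂ hN₁₂ hcm3 hcp3 hcm3' hcp3' hcm2 hcp2 hcm2' hcp2' hA
  clear hμdef hμ₁def hμ₂def hN₁def hN₂def
  clear μ μ₁ μ₂ N₁ N₂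
  set X := cusum x cm c₀ cp with hXdef
  set R := RSS x n A with hRdef
  set R' := RSS x n (A.erase c₀) with hR'def
  clear_value X R R'
  have hn0 : (0:ℝ) < n := by exact_mod_cast hn
  have hR : 0 < R := lt_of_lt_of_le (by positivity) hlow
  have hXnn : (0:ℝ) ≤ X^2 := sq_nonneg X
  have hR' : 0 < R' := by rw [hkey]; linarith [sq_nonneg X]
  have hC'' : 0 < C'' := lt_of_lt_of_le hC' hC'C''
  have hcard : ((A.erase c₀).card : ℝ) = (A.card : ℝ) - 1 := by
    rw [Finset.card_erase_of_mem hc₀]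
    have h1 : 1 ≤ A.card := Finset.card_pos.mpr ⟨c₀, hc₀⟩
    rw [Nat.cast_sub h1]
    norm_num
  have hdiff : SC x n ξ (A.erase c₀) - SC x n ξ A = ((n:ℝ)/2) * Real.log (R'/R) - ξ := by
    rw [SC, SC, ← hRdef, ← hR'def, Real.log_div hR'.ne' hn0.ne', Real.log_div hR.ne' hn0.ne',
      Real.log_div hR'.ne' hR.ne', hcard]
    ring
  rw [hdiff]
  constructor
  · -- lower bound
    have h1 : Real.log (R/R') ≤ R/R' - 1 := Real.log_le_sub_one_of_pos (div_pos hR hR')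
    have h2 : Real.log (R/R') = Real.log R - Real.log R' := Real.log_div hR.ne' hR'.ne'
    have h3 : Real.log (R'/R) = Real.log R' - Real.log R := Real.log_div hR'.ne' hR.ne'
    have h4 : 1 - R/R' = X^2/R' := by
      have hd : X^2 = R' - R := by rw [hkey]; ring
      rw [hd, sub_div, div_self hR'.ne']
    have h5 : X^2/R' ≤ Real.log (R'/R) := by
      rw [← h4]; linarith
    have h6 : X^2/(2*C'') ≤ ((n:ℝ)/2) * (X^2/R') := by
      have he : ((n:ℝ)/2) * (X^2/R') = ((n:ℝ) * X^2)/(2*R') := by ring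
      rw [he, div_le_div_iff₀ (by linarith) (by linarith)]
      nlinarith [mul_le_mul_of_nonneg_left hup hXnn]
    have h7 : ((n:ℝ)/2) * (X^2/R') ≤ ((n:ℝ)/2) * Real.log (R'/R) :=
      mul_le_mul_of_nonneg_left h5 (by linarith)
    linarith
  · -- upper bound
    have h1 : Real.log (R'/R) ≤ R'/R - 1 := Real.log_le_sub_one_of_pos (div_pos hR' hR)
    have h2 : R'/R - 1 = X^2/R := by
      have hd : X^2 = R' - R := by rw [hkey]; ring
      rw [hd, sub_div, div_self hR.ne']
    have h3 : ((n:ℝ)/2) * Real.log (R'/R) ≤ ((n:ℝ)/2) * (X^2/R) :=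
      mul_le_mul_of_nonneg_left (by rw [← h2] at *; linarith) (by linarith)
    have h4 : ((n:ℝ)/2) * (X^2/R) ≤ X^2/(2*C') := by
      have he : ((n:ℝ)/2) * (X^2/R) = ((n:ℝ) * X^2)/(2*R) := by ring
      rw [he, div_le_div_iff₀ (by linarith) (by linarith)]
      nlinarith [mul_le_mul_of_nonneg_left hlow hXnn]
    linarith
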